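/- arXiv:1003.5409 — 8 statements merged into one kernel-verified Lean document; each statement's English description precedes it below -/
import Mathlib

section
/- The subgroup H = {(-x, x) : x ∈ ℚ} is a closed and discrete subgroup of the square of the Sorgenfrey line 𝕃². -/
/-!
The Sorgenfrey topology is finer than the usual one, so the antidiagonal `x + y = c` is closed
in `𝕃²`. For a point `p` on it, the quadrant `[p.1, ∞) × [p.2, ∞)` is open in `𝕃²` and meets
the antidiagonal only in `p`, so the antidiagonal is discrete. Hence each of its subsets, `H` in
particular, is closed and discrete.
-/

def sorgenfrey : TopologicalSpace ℝ :=
  TopologicalSpace.generateFrom {s : Set ℝ | ∃ a b : ℝ, a < b ∧ s = Set.Ico a b}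

open Set Topology

theorem discreteTopology_of_isolated {X : Type*} [TopologicalSpace X] {L : Set X}
    (h : ∀ x ∈ L, ∃ U ∈ 𝓝 x, U ∩ L ⊆ {x}) : DiscreteTopology L := by
  refine discreteTopology_iff_singleton_mem_nhds.2 fun ⟨x, hx⟩ ↦ ?_
  obtain ⟨U, hU, hUL⟩ := h x hx
  exact Filter.mem_of_superset (continuous_subtype_val.continuousAt.preimage_mem_nhds hU)
    fun y hy ↦ Subtype.ext (hUL ⟨hy, y.2⟩)

theorem IsClosed.of_subset_of_discreteTopology {X : Type*} [TopologicalSpace X] {L S : Set X}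
    (hL : IsClosed L) [DiscreteTopology L] (hS : S ⊆ L) : IsClosed S := by
  simpa [inter_eq_right.2 hS] using (isClosed_discrete (Subtype.val ⁻¹' S : Set L)).trans hL

theorem sorgenfrey_isOpen_Ico (a b : ℝ) :
    letI := sorgenfrey
    IsOpen (Ico a b) := by
  let := sorgenfrey
  rcases lt_or_ge a b with hab | hab
  · exact .basic _ ⟨a, b, hab, rfl⟩
  · rw [Ico_eq_empty hab.not_gt]
    exact isOpen_empty

theorem sorgenfrey_isOpen_Ici (a : ℝ) :
    letI := sorgenfrey
    IsOpen (Ici a) := by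
  let := sorgenfrey
  exact iUnion_Ico_right a ▸ isOpen_iUnion (sorgenfrey_isOpen_Ico a)

theorem sorgenfrey_le : sorgenfrey ≤ (inferInstance : TopologicalSpace ℝ) := by
  rw [OrderTopology.topology_eq_generate_intervals (α := ℝ)]
  refine le_generateFrom ?_
  let := sorgenfrey
  rintro s ⟨a, rfl | rfl⟩
  · rw [← isGLB_Ioi.biUnion_Ici_eq_Ioi (lt_irrefl a)]
    exact isOpen_biUnion fun b _ ↦ sorgenfrey_isOpen_Ici b
  · rw [← iUnion_Ico_eq_Iio_self_iff.2 fun x _ ↦ ⟨x, le_rfl⟩]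
    exact isOpen_iUnion fun b ↦ sorgenfrey_isOpen_Ico b a

theorem sorgenfrey_prod_isClosed {s : Set (ℝ × ℝ)} (hs : IsClosed s) :
    letI := sorgenfrey
    IsClosed s :=
  hs.mono (TopologicalSpace.prod_mono sorgenfrey_le sorgenfrey_le)

theorem sorgenfrey_prod_isClosed_and_discreteTopology_of_subset_antidiagonal
    {S : Set (ℝ × ℝ)} {c : ℝ} (hS : ∀ p ∈ S, p.1 + p.2 = c) :
    letI := sorgenfrey
    IsClosed S ∧ DiscreteTopology S := by
  let L := {p : ℝ × ℝ | p.1 + p.2 = c}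
  have hL := sorgenfrey_prod_isClosed (isClosed_eq continuous_add continuous_const : IsClosed L)
  let := sorgenfrey
  have : DiscreteTopology L := discreteTopology_of_isolated fun p hp ↦ by
    refine ⟨Ici p, ?_, fun q ⟨hq, hqL⟩ ↦ ?_⟩
    · rw [Ici_prod_eq]
      exact ((sorgenfrey_isOpen_Ici _).prod (sorgenfrey_isOpen_Ici _)).mem_nhds
        ⟨self_mem_Ici, self_mem_Ici⟩
    · obtain ⟨h1, h2⟩ := hq
      have hp' : p.1 + p.2 = c := hp
      have hq' : q.1 + q.2 = c := hqL
      exact Prod.ext (by linarith) (by linarith)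
  exact ⟨hL.of_subset_of_discreteTopology hS, .of_subset this hS⟩

/-- The subgroup `H = {(-x, x) : x ∈ ℚ}` is a closed and discrete subgroup of the square
of the Sorgenfrey line `𝕃²` (with the product topology). -/
theorem stmt_1 :
    letI : TopologicalSpace ℝ := sorgenfrey
    IsClosed {p : ℝ × ℝ | ∃ q : ℚ, p = (-(q : ℝ), (q : ℝ))} ∧
      DiscreteTopology {p : ℝ × ℝ | ∃ q : ℚ, p = (-(q : ℝ), (q : ℝ))} :=
  sorgenfrey_prod_isClosed_and_discreteTopology_of_subset_antidiagonal (c := 0) <| by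
    rintro _ ⟨q, rfl⟩
    exact neg_add_cancel _
end

section
/- For the closed discrete subgroup H = {(-x,x) : x ∈ ℚ} of G = 𝕃² (the square of the Sorgenfrey line), the quotient group G/H with the quotient topology is not Hausdorff: for any irrational x, the coset (-x,x)+H cannot be separated from the identity coset by disjoint open sets. -/
/-- The subgroup `H = {(-x, x) : x ∈ ℚ}` of `ℝ × ℝ`. -/
noncomputable def Hsub : AddSubgroup (ℝ × ℝ) :=
  AddMonoidHom.range
    (AddMonoidHom.prod (-(Rat.castHom ℝ).toAddMonoidHom) (Rat.castHom ℝ).toAddMonoidHom)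

open Set Filter Topology

lemma sorgenfrey_exists_Ico_subset {u : Set ℝ} (hu : IsOpen[sorgenfrey] u) {a : ℝ} (ha : a ∈ u) :
    ∃ b, a < b ∧ Ico a b ⊆ u := by
  induction hu generalizing a with
  | basic s hs =>
    obtain ⟨c, d, -, rfl⟩ := hs
    exact ⟨d, ha.2, Ico_subset_Ico_left ha.1⟩
  | univ => exact ⟨a + 1, lt_add_one a, subset_univ _⟩
  | inter s t _ _ ihs iht =>
    obtain ⟨b₁, hab₁, hs⟩ := ihs ha.1
    obtain ⟨b₂, hab₂, ht⟩ := iht ha.2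
    exact ⟨min b₁ b₂, lt_min hab₁ hab₂, subset_inter
      ((Ico_subset_Ico_right (min_le_left _ _)).trans hs)
      ((Ico_subset_Ico_right (min_le_right _ _)).trans ht)⟩
  | sUnion S _ ih =>
    obtain ⟨s, hsS, has⟩ := ha
    obtain ⟨b, hab, hs⟩ := ih s hsS has
    exact ⟨b, hab, hs.trans (subset_sUnion_of_mem hsS)⟩

lemma sorgenfrey_eventually_Ico_subset {u : Set ℝ} (hu : IsOpen[sorgenfrey] u) {a : ℝ}
    (ha : a ∈ u) : ∀ᶠ ε in 𝓝[>] (0 : ℝ), Ico a (a + ε) ⊆ u := by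
  obtain ⟨b, hab, hbu⟩ := sorgenfrey_exists_Ico_subset hu ha
  filter_upwards [Ioo_mem_nhdsGT (sub_pos.2 hab)] with ε hε
  exact (Ico_subset_Ico_right (by linarith [hε.2])).trans hbu

lemma sorgenfrey_prod_eventually_Ico_prod_subset {s : Set (ℝ × ℝ)}
    (hs : letI := sorgenfrey; IsOpen s) {p : ℝ × ℝ} (hp : p ∈ s) :
    ∀ᶠ ε in 𝓝[>] (0 : ℝ), Ico p.1 (p.1 + ε) ×ˢ Ico p.2 (p.2 + ε) ⊆ s := by
  let := sorgenfrey
  obtain ⟨u, v, hu, hv, hpu, hpv, huv⟩ := isOpen_prod_iff.1 hs p.1 p.2 hp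
  filter_upwards [sorgenfrey_eventually_Ico_subset hu hpu,
    sorgenfrey_eventually_Ico_subset hv hpv] with ε hu hv
  exact (prod_mono hu hv).trans huv

lemma mem_Hsub_iff {p : ℝ × ℝ} : p ∈ Hsub ↔ ∃ q : ℚ, ((-q : ℝ), (q : ℝ)) = p := by
  simp [Hsub]

lemma mk_neg_self_ne_mk_zero {x : ℝ} (hx : Irrational x) :
    (QuotientAddGroup.mk (-x, x) : (ℝ × ℝ) ⧸ Hsub) ≠ QuotientAddGroup.mk ((0 : ℝ), (0 : ℝ)) := by
  rw [Ne, QuotientAddGroup.eq, mem_Hsub_iff]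
  rintro ⟨q, hq⟩
  simp only [Prod.ext_iff, Prod.fst_add, Prod.snd_add, Prod.fst_neg, Prod.snd_neg, add_zero] at hq
  exact hx ⟨-q, by push_cast; linarith [hq.2]⟩

lemma mk_neg_rat_eq_mk_zero_sub (q : ℚ) (x : ℝ) :
    (QuotientAddGroup.mk (-(q : ℝ), x) : (ℝ × ℝ) ⧸ Hsub) = QuotientAddGroup.mk (0, x - q) := by
  rw [QuotientAddGroup.eq, mem_Hsub_iff]
  refine ⟨-q, ?_⟩
  simp only [Rat.cast_neg, neg_neg, Prod.neg_mk, Prod.mk_add_mk, add_zero, Prod.mk.injEq, true_and]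
  ring

theorem inter_nonempty_of_mk_neg_self_mem_of_mk_zero_mem (x : ℝ) {U V : Set ((ℝ × ℝ) ⧸ Hsub)}
    (hU : letI := sorgenfrey; IsOpen U) (hV : letI := sorgenfrey; IsOpen V)
    (hxU : QuotientAddGroup.mk (-x, x) ∈ U) (h0V : QuotientAddGroup.mk ((0 : ℝ), (0 : ℝ)) ∈ V) :
    (U ∩ V).Nonempty := by
  -- stated before `let`, so that `𝓝[>] 0` is taken in the usual topology of `ℝ`
  have hpos : ∀ᶠ ε in 𝓝[>] (0 : ℝ), 0 < ε := self_mem_nhdsWithin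
  let := sorgenfrey
  obtain ⟨ε, hεU, hεV, hε⟩ := (sorgenfrey_prod_eventually_Ico_prod_subset
    (hU.preimage continuous_quot_mk) hxU |>.and <| sorgenfrey_prod_eventually_Ico_prod_subset
    (hV.preimage continuous_quot_mk) h0V |>.and hpos).exists
  obtain ⟨q, hxq, hqx⟩ := exists_rat_btwn (sub_lt_self x hε)
  refine ⟨QuotientAddGroup.mk (-(q : ℝ), x), hεU ⟨⟨?_, ?_⟩, le_rfl, ?_⟩, ?_⟩
  · exact neg_le_neg hqx.le
  · linarith
  · linarith
  · rw [mk_neg_rat_eq_mk_zero_sub]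
    exact hεV ⟨⟨le_rfl, by linarith⟩, ⟨by linarith, by linarith⟩⟩

/-- For the closed discrete subgroup `H = {(-x,x) : x ∈ ℚ}` of `G = 𝕃²` (the square of
the Sorgenfrey line), the quotient group `G/H` with the quotient topology is not Hausdorff:
for any irrational `x`, the coset of `(-x, x)` cannot be separated from the identity coset
by disjoint open sets. -/
theorem stmt_2 :
    letI : TopologicalSpace ℝ := sorgenfrey
    (¬ T2Space ((ℝ × ℝ) ⧸ Hsub)) ∧
      ∀ x : ℝ, Irrational x →
        ∀ U V : Set ((ℝ × ℝ) ⧸ Hsub), IsOpen U → IsOpen V →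
          (QuotientAddGroup.mk (-x, x) ∈ U) → (QuotientAddGroup.mk ((0 : ℝ), (0 : ℝ)) ∈ V) →
            (U ∩ V).Nonempty := by
  let := sorgenfrey
  refine ⟨fun _ => ?_, fun x _ U V hU hV => inter_nonempty_of_mk_neg_self_mem_of_mk_zero_mem x hU hV⟩
  obtain ⟨U, V, hU, hV, hxU, h0V, hUV⟩ := t2_separation (mk_neg_self_ne_mk_zero irrational_sqrt_two)
  exact not_nonempty_iff_eq_empty.2 hUV.inter_eq
    (inter_nonempty_of_mk_neg_self_mem_of_mk_zero_mem _ hU hV hxU h0V)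
end

section
/- For every paratopological group (G, τ) there exists a unique topology τ♭ on G such that: (G, τ♭) is a topological group, τ♭ ⊆ τ, and for every continuous group homomorphism h from (G,τ) to a topological group T, h is also continuous as a map from (G, τ♭) to T. Equivalently, τ♭ is the strongest group topology on G weaker than τ. -/
universe u v

namespace TopologicalSpace

variable {G : Type u} [Group G]

/-- In Mathlib's order on topologies `τ ≤ t` means `t` is coarser, so the group reflexion `τ♭`,
the finest group topology coarser than `τ`, is the infimum of all such group topologies. -/
abbrev groupReflexion (τ : TopologicalSpace G) : TopologicalSpace G :=
  sInf {t | τ ≤ t ∧ @IsTopologicalGroup G t _}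

theorem isLeast_groupReflexion (τ : TopologicalSpace G) :
    IsLeast {t | τ ≤ t ∧ @IsTopologicalGroup G t _} τ.groupReflexion :=
  ⟨⟨le_sInf fun _ ht => ht.1, topologicalGroup_sInf fun _ ht => ht.2⟩, fun _ ht => sInf_le ht⟩

theorem continuous_groupReflexion {τ : TopologicalSpace G} {T : Type v} [Group T]
    [tT : TopologicalSpace T] [IsTopologicalGroup T] (h : G →* T)
    (hc : @Continuous G T τ tT h) : @Continuous G T τ.groupReflexion tT h :=
  continuous_iff_le_induced.mpr <|
    (isLeast_groupReflexion τ).2 ⟨continuous_iff_le_induced.mp hc, topologicalGroup_induced h⟩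

end TopologicalSpace

theorem stmt_4_general {G : Type u} [Group G] (τ : TopologicalSpace G) :
    ∃! t : TopologicalSpace G,
      @IsTopologicalGroup G t _ ∧ τ ≤ t ∧
        (∀ (T : Type v) [Group T] [tT : TopologicalSpace T] [@IsTopologicalGroup T tT _]
          (h : G →* T), @Continuous G T τ tT h → @Continuous G T t tT h) ∧
        (∀ t' : TopologicalSpace G, τ ≤ t' → @IsTopologicalGroup G t' _ → t ≤ t') := by
  have hleast := TopologicalSpace.isLeast_groupReflexion τ
  refine ⟨τ.groupReflexion, ⟨hleast.1.2, hleast.1.1,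
    fun T _ _ _ h => TopologicalSpace.continuous_groupReflexion h,
    fun t' hτ ht' => hleast.2 ⟨hτ, ht'⟩⟩, ?_⟩
  rintro t ⟨ht_group, hτ_le, -, ht_greatest⟩
  have ht_least : IsLeast {t' | τ ≤ t' ∧ @IsTopologicalGroup G t' _} t :=
    ⟨⟨hτ_le, ht_group⟩, fun t' ht' => ht_greatest t' ht'.1 ht'.2⟩
  exact ht_least.unique hleast

/-- For every paratopological group `(G, τ)` there is a unique topology `τ♭` on `G` such that
`(G, τ♭)` is a topological group, `τ♭` is weaker than `τ`, every continuous homomorphism from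
`(G, τ)` to a topological group remains continuous from `(G, τ♭)`, and `τ♭` is the strongest
group topology weaker than `τ`.  (Recall that in Mathlib `τ ≤ t` means `τ` is finer than `t`,
i.e., `t` is weaker than `τ`, and `t ≤ t'` means `t` is stronger than `t'`.) -/
theorem stmt_4 {G : Type u} [Group G] (τ : TopologicalSpace G) (hG : @ContinuousMul G τ _) :
    ∃! t : TopologicalSpace G,
      @IsTopologicalGroup G t _ ∧ τ ≤ t ∧
        (∀ (T : Type v) [Group T] [tT : TopologicalSpace T] [@IsTopologicalGroup T tT _]
          (h : G →* T), @Continuous G T τ tT h → @Continuous G T t tT h) ∧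
        (∀ t' : TopologicalSpace G, τ ≤ t' → @IsTopologicalGroup G t' _ → t ≤ t') :=
  stmt_4_general τ
end

section
/- Every saturated paratopological group is 2-oscillating. -/
/-!
If `x ∈ interior U⁻¹`, the translate `V = x⁻¹ • interior U⁻¹` is an open neighbourhood of `1`,
and left translation does not change `V⁻¹ * V`, so `V⁻¹ * V = (interior U⁻¹)⁻¹ * interior U⁻¹`,
which lies in `U * U⁻¹`.
-/

open scoped Pointwise

theorem Set.smul_set_inv_mul_smul_set {G : Type*} [Group G] (a : G) (s : Set G) :
    (a • s)⁻¹ * (a • s) = s⁻¹ * s := by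
  rw [Set.inv_smul_set_distrib, Set.op_smul_set_mul_eq_mul_smul_set, smul_smul,
    inv_mul_cancel, one_smul]

/-- Every saturated paratopological group (one in which `U⁻¹` has nonempty interior for each
neighborhood `U` of the identity) is 2-oscillating: for each neighborhood `U` of the identity
there is a neighborhood `V` of the identity with `V⁻¹ * V ⊆ U * U⁻¹`. -/
theorem stmt_7 {G : Type*} [Group G] [TopologicalSpace G] [ContinuousMul G]
    (hsat : ∀ U ∈ nhds (1 : G), (interior U⁻¹).Nonempty) :
    ∀ U ∈ nhds (1 : G), ∃ V ∈ nhds (1 : G), V⁻¹ * V ⊆ U * U⁻¹ := by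
  intro U hU
  obtain ⟨x, hx⟩ := hsat U hU
  refine ⟨x⁻¹ • interior U⁻¹, ?_, ?_⟩
  · exact (isOpen_interior.smul x⁻¹).mem_nhds ⟨x, hx, inv_mul_cancel x⟩
  · rw [Set.smul_set_inv_mul_smul_set]
    simpa only [inv_inv] using
      Set.mul_subset_mul (Set.inv_subset_inv.2 (interior_subset (s := U⁻¹))) interior_subset
end

section
/- Let H be a normal subgroup of a paratopological group G whose group reflexion G♭ is Hausdorff. Then the quotient paratopological group G/H is ♭-separated (i.e., the group reflexion of G/H is Hausdorff) if and only if H is closed in G♭. -/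
open Topology
/-- The group reflexion topology `τ♭`: the strongest group topology on `G` weaker than `τ`. -/
def flatTop (G : Type*) [Group G] (τ : TopologicalSpace G) : TopologicalSpace G :=
  sInf {t : TopologicalSpace G | τ ≤ t ∧ @IsTopologicalGroup G t _}

/-!
The group reflexion commutes with quotients: `(G/H)♭ = G♭/H`. Indeed the quotient of the group
topology `τ♭` is a group topology weaker than the quotient topology, and conversely the pullback
of `(G/H)♭` along `G → G/H` is a group topology weaker than `τ`. Hence `(G/H)♭` is the quotient
of the topological group `G♭` by `H`, and such a quotient is Hausdorff iff `H` is closed.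
-/

section Reflexion

variable {G : Type*} [Group G]

theorem le_flatTop (τ : TopologicalSpace G) : τ ≤ flatTop G τ :=
  le_sInf fun _ ht => ht.1

theorem isTopologicalGroup_flatTop (τ : TopologicalSpace G) :
    @IsTopologicalGroup G (flatTop G τ) _ :=
  topologicalGroup_sInf fun _ ht => ht.2

theorem flatTop_le {τ t : TopologicalSpace G} (hτt : τ ≤ t) (ht : @IsTopologicalGroup G t _) :
    flatTop G τ ≤ t :=
  sInf_le ⟨hτt, ht⟩

theorem flatTop_coinduced_mk (τ : TopologicalSpace G) (H : Subgroup G) [H.Normal] :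
    flatTop (G ⧸ H) (τ.coinduced QuotientGroup.mk) =
      (flatTop G τ).coinduced QuotientGroup.mk := by
  apply le_antisymm
  · let := flatTop G τ
    have := isTopologicalGroup_flatTop τ
    exact flatTop_le (coinduced_mono (le_flatTop τ)) (QuotientGroup.instIsTopologicalGroup H)
  · let := flatTop (G ⧸ H) (τ.coinduced QuotientGroup.mk)
    have := isTopologicalGroup_flatTop (τ.coinduced (QuotientGroup.mk : G → G ⧸ H))
    exact coinduced_le_iff_le_induced.2 <|
      flatTop_le (coinduced_le_iff_le_induced.1 (le_flatTop _))
        (topologicalGroup_induced (QuotientGroup.mk' H))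

end Reflexion

theorem QuotientGroup.t2Space_iff {G : Type*} [Group G] [TopologicalSpace G]
    [IsTopologicalGroup G] (H : Subgroup G) [H.Normal] :
    T2Space (G ⧸ H) ↔ IsClosed (H : Set G) :=
  ⟨fun _ => t1Space_iff.mp inferInstance, fun hH =>
    have : IsClosed (H : Set G) := hH
    inferInstance⟩

theorem stmt_9_general {G : Type*} [Group G] [τ : TopologicalSpace G]
    (H : Subgroup G) [H.Normal] :
    @T2Space (G ⧸ H) (flatTop (G ⧸ H) (inferInstance : TopologicalSpace (G ⧸ H))) ↔
      IsClosed[flatTop G τ] (H : Set G) := by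
  rw [show (inferInstance : TopologicalSpace (G ⧸ H)) = τ.coinduced QuotientGroup.mk from rfl,
    flatTop_coinduced_mk]
  let := flatTop G τ
  have := isTopologicalGroup_flatTop τ
  exact QuotientGroup.t2Space_iff H

/-- Let `H` be a normal subgroup of a paratopological group `G` whose group reflexion `G♭`
is Hausdorff.  Then the quotient paratopological group `G/H` is ♭-separated (its group
reflexion is Hausdorff) if and only if `H` is closed in `G♭`. -/
theorem stmt_9 {G : Type*} [Group G] [τ : TopologicalSpace G] [ContinuousMul G]
    (H : Subgroup G) [H.Normal] (hsep : @T2Space G (flatTop G τ)) :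
    @T2Space (G ⧸ H) (flatTop (G ⧸ H) (inferInstance : TopologicalSpace (G ⧸ H))) ↔
      IsClosed[flatTop G τ] (H : Set G) :=
  stmt_9_general (τ := τ) H
end

section
/- If H is a normal subgroup of a ♭-separated paratopological group G that is closed in the group reflexion G♭, then the quotient G/H is Hausdorff. -/
open Topology

/-! The identity `G ⧸ H → G♭ ⧸ H` is continuous, and `G♭ ⧸ H` is Hausdorff because `H` is a
closed subgroup of the topological group `G♭`; a topology finer than a Hausdorff one is
Hausdorff. -/

section GroupReflexion

variable {G : Type*} [Group G]

-- `τ` is bound after `t` so that instance resolution gives `G ⧸ H` the quotient of `τ`, not of `t`.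
theorem QuotientGroup.t2Space_of_le_of_isClosed {t : TopologicalSpace G} [τ : TopologicalSpace G]
    (hτt : τ ≤ t) (ht : @IsTopologicalGroup G t _) {H : Subgroup G}
    (hH : IsClosed[t] (H : Set G)) : T2Space (G ⧸ H) :=
  have : @T2Space (G ⧸ H) (.coinduced (↑) t) := @QuotientGroup.instT2Space G _ t ht H hH
  t2Space_antitone (coinduced_mono hτt) this

end GroupReflexion

theorem stmt_10_general {G : Type*} [Group G] [τ : TopologicalSpace G]
    (H : Subgroup G)
    (hH : IsClosed[flatTop G τ] (H : Set G)) :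
    T2Space (G ⧸ H) :=
  QuotientGroup.t2Space_of_le_of_isClosed (le_flatTop τ) (isTopologicalGroup_flatTop τ) hH

/-- If `H` is a normal subgroup of a ♭-separated paratopological group `G` (one whose group
reflexion is Hausdorff) and `H` is closed in the group reflexion `G♭`, then the quotient
`G/H` is Hausdorff. -/
theorem stmt_10 {G : Type*} [Group G] [τ : TopologicalSpace G] [ContinuousMul G]
    (H : Subgroup G) [H.Normal] (hsep : @T2Space G (flatTop G τ))
    (hH : IsClosed[flatTop G τ] (H : Set G)) :
    T2Space (G ⧸ H) :=
  stmt_10_general (τ := τ) H hH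
end

section
/- Let G be a topological group, S ⊆ G a closed subsemigroup with e ∈ S such that e is a cluster point of the interior of S in G. Then the paratopological group (G, τ_S) with the cone topology is saturated: for every τ_S-neighborhood U of e, the set U⁻¹ has nonempty τ_S-interior. -/
open Set

/-- The cone topology on a topological group `G` determined by a subsemigroup `S ∋ 1`:
a set `U` is open iff each of its points `x` has a neighborhood of the form `x * (W ∩ S)`
inside `U`, where `W` is an open neighborhood of the identity in the original topology. -/
def coneTop {G : Type*} [Group G] [TopologicalSpace G] (S : Set G) : TopologicalSpace G where
  IsOpen U := ∀ x ∈ U, ∃ W : Set G, IsOpen W ∧ (1 : G) ∈ W ∧ (fun w => x * w) '' (W ∩ S) ⊆ U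
  isOpen_univ := fun x _ => ⟨univ, isOpen_univ, mem_univ _, fun _ _ => mem_univ _⟩
  isOpen_inter := by
    intro U V hU hV x hx
    obtain ⟨W₁, hW₁, h1W₁, hsub₁⟩ := hU x hx.1
    obtain ⟨W₂, hW₂, h1W₂, hsub₂⟩ := hV x hx.2
    refine ⟨W₁ ∩ W₂, hW₁.inter hW₂, ⟨h1W₁, h1W₂⟩, ?_⟩
    rintro y ⟨w, ⟨⟨hw₁, hw₂⟩, hwS⟩, rfl⟩
    exact ⟨hsub₁ ⟨w, ⟨hw₁, hwS⟩, rfl⟩, hsub₂ ⟨w, ⟨hw₂, hwS⟩, rfl⟩⟩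
  isOpen_sUnion := by
    intro 𝒮 h x hx
    obtain ⟨U, hU, hxU⟩ := hx
    obtain ⟨W, hW, h1W, hsub⟩ := h U hU x hxU
    exact ⟨W, hW, h1W, hsub.trans (subset_sUnion_of_mem hU)⟩

/-!
The cone topology refines the group topology, and a `τ_S`-neighbourhood `U` of `1` contains
`W ∩ S` for some open `W ∋ 1`. Hence `U⁻¹` contains `(W ∩ interior S)⁻¹`, which is open in `G`,
so `τ_S`-open, and nonempty because `1` is a cluster point of `interior S`.
-/

theorem coneTop_le {G : Type*} [Group G] [TopologicalSpace G] [ContinuousMul G] (S : Set G) :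
    coneTop S ≤ ‹TopologicalSpace G› := by
  intro O hO x hx
  refine ⟨(x * ·) ⁻¹' O, hO.preimage (continuous_const_mul x), by simpa using hx, ?_⟩
  rintro _ ⟨w, ⟨hw, -⟩, rfl⟩
  exact hw

theorem exists_inter_subset_of_mem_coneTop_nhds_one {G : Type*} [Group G] [TopologicalSpace G]
    {S U : Set G} (hU : U ∈ @nhds G (coneTop S) 1) :
    ∃ W : Set G, IsOpen W ∧ (1 : G) ∈ W ∧ W ∩ S ⊆ U := by
  obtain ⟨t, htU, hto, h1t⟩ := (@mem_nhds_iff G (x := 1) (s := U) (coneTop S)).mp hU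
  obtain ⟨W, hWo, h1W, hWt⟩ := hto 1 h1t
  exact ⟨W, hWo, h1W, fun w hw => htU (hWt ⟨w, hw, one_mul w⟩)⟩

theorem stmt_17_general {G : Type*} [Group G] [TopologicalSpace G] [IsTopologicalGroup G]
    (S : Set G) (hacc : AccPt (1 : G) (Filter.principal (interior S))) :
    ∀ U ∈ @nhds G (coneTop S) 1, (@interior G (coneTop S) U⁻¹).Nonempty := by
  intro U hU
  obtain ⟨W, hWo, h1W, hWU⟩ := exists_inter_subset_of_mem_coneTop_nhds_one hU
  obtain ⟨s, ⟨hsW, hsS⟩, -⟩ := accPt_iff_nhds.mp hacc W (hWo.mem_nhds h1W)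
  have hsub : (W ∩ interior S)⁻¹ ⊆ U⁻¹ :=
    inv_subset_inv.mpr ((inter_subset_inter_right W interior_subset).trans hWU)
  have hopen : @IsOpen G (coneTop S) (W ∩ interior S)⁻¹ :=
    coneTop_le S _ (hWo.inter isOpen_interior).inv
  have hs : s⁻¹ ∈ (W ∩ interior S)⁻¹ := by simpa using And.intro hsW hsS
  exact ⟨s⁻¹, (@interior_maximal G (coneTop S) _ _ hsub hopen) hs⟩

/-- If `S` is a closed subsemigroup of a topological group `G` with `1 ∈ S` such that `1` is
a cluster (accumulation) point of the interior of `S`, then the paratopological group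
`(G, τ_S)` with the cone topology is saturated: for every `τ_S`-neighborhood `U` of the
identity, `U⁻¹` has nonempty `τ_S`-interior. -/
theorem stmt_17 {G : Type*} [Group G] [TopologicalSpace G] [IsTopologicalGroup G]
    (S : Set G) (hS : IsClosed S) (hmul : ∀ a ∈ S, ∀ b ∈ S, a * b ∈ S) (h1 : (1 : G) ∈ S)
    (hacc : AccPt (1 : G) (Filter.principal (interior S))) :
    ∀ U ∈ @nhds G (coneTop S) 1, (@interior G (coneTop S) U⁻¹).Nonempty :=
  stmt_17_general S hacc
end

section
/- Fix rationals z_n with 0 < √2 − z_n < 2^{−n}, and let S ⊆ ℚ³ be the smallest closed cone (closed under addition and nonnegative rational scaling, closed in the Euclidean topology of ℚ³) containing (1,0,0) and (1/n, 1, z_n) for all n ≥ 1. Then there is no x ∈ ℚ with (0,1,x) ∈ S. -/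
/-!
A closed half-space `{v | 0 ≤ f v}` bounded by a continuous linear form is a closed cone, so it
contains `S` as soon as it contains the generators. If `(0, 1, x) ∈ S` with `x ∈ ℚ`, then
`x ≠ √2`, and a rational `r` strictly between `x` and `√2` gives such a half-space missing
`(0, 1, x)`: `{v | r v₂ ≤ v₃ + v₁}` if `x < r < √2` (it contains the generators because
`z n + 1/n > √2`), and `{v | v₃ ≤ r v₂}` if `√2 < r < x` (because `z n < √2`).
-/

section ClosedCone

variable {𝕜 E : Type*} [Field 𝕜] [LinearOrder 𝕜] [IsStrictOrderedRing 𝕜]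
  [TopologicalSpace 𝕜] [OrderClosedTopology 𝕜] [AddCommMonoid E] [Module 𝕜 E] [TopologicalSpace E]

theorem ContinuousLinearMap.nonneg_of_mem_sInter_closedCones (f : E →L[𝕜] 𝕜)
    {P : Set E → Prop} (hP : P {v | 0 ≤ f v}) {x : E}
    (hx : x ∈ ⋂₀ {C : Set E | IsClosed C ∧ (∀ a ∈ C, ∀ b ∈ C, a + b ∈ C) ∧
      (∀ q : 𝕜, 0 ≤ q → ∀ v ∈ C, q • v ∈ C) ∧ P C}) :
    0 ≤ f x := by
  refine hx {v | 0 ≤ f v} ⟨isClosed_le continuous_const f.continuous, ?_, ?_, hP⟩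
  · intro a ha b hb
    simpa only [Set.mem_ofPred_eq, map_add] using add_nonneg ha hb
  · intro q hq v hv
    simpa only [Set.mem_ofPred_eq, map_smul, smul_eq_mul] using mul_nonneg hq hv

end ClosedCone

def coordForm (a b c : ℚ) : ℚ × ℚ × ℚ →L[ℚ] ℚ where
  toFun v := a * v.1 + b * v.2.1 + c * v.2.2
  map_add' v w := by simp only [Prod.fst_add, Prod.snd_add]; ring
  map_smul' q v := by
    simp only [Prod.smul_fst, Prod.smul_snd, smul_eq_mul, RingHom.id_apply]; ring
  cont := by fun_prop

@[simp]
theorem coordForm_apply (a b c : ℚ) (v : ℚ × ℚ × ℚ) :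
    coordForm a b c v = a * v.1 + b * v.2.1 + c * v.2.2 :=
  rfl

theorem two_zpow_neg_le_inv_natCast {n : ℕ} (hn : 1 ≤ n) :
    (2 : ℝ) ^ (-(n : ℤ)) ≤ (n : ℝ)⁻¹ := by
  rw [zpow_neg, zpow_natCast]
  exact inv_anti₀ (by exact_mod_cast hn) (by exact_mod_cast Nat.lt_two_pow_self.le)

/-- Fix rationals `z n` with `0 < √2 − z n < 2⁻ⁿ` (for `n ≥ 1`), and let `S ⊆ ℚ³` be the
smallest closed cone (closed under addition and nonnegative rational scaling, and
topologically closed in the Euclidean topology of `ℚ³`) containing `(1,0,0)` and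
`(1/n, 1, z n)` for all `n ≥ 1`.  Then there is no `x ∈ ℚ` with `(0, 1, x) ∈ S`. -/
theorem stmt_18 (z : ℕ → ℚ)
    (hz : ∀ n : ℕ, 1 ≤ n →
      0 < Real.sqrt 2 - (z n : ℝ) ∧ Real.sqrt 2 - (z n : ℝ) < (2 : ℝ) ^ (-(n : ℤ))) :
    ¬ ∃ x : ℚ, ((0 : ℚ), (1 : ℚ), x) ∈
      ⋂₀ {C : Set (ℚ × ℚ × ℚ) |
        IsClosed C ∧
        (∀ a ∈ C, ∀ b ∈ C, a + b ∈ C) ∧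
        (∀ q : ℚ, 0 ≤ q → ∀ v ∈ C, q • v ∈ C) ∧
        ((1 : ℚ), (0 : ℚ), (0 : ℚ)) ∈ C ∧
        (∀ n : ℕ, 1 ≤ n → ((1 / n : ℚ), (1 : ℚ), z n) ∈ C)} := by
  rintro ⟨x, hx⟩
  rcases (irrational_sqrt_two.ne_rat x).symm.lt_or_gt with hlt | hgt
  · obtain ⟨r, hxr, hr⟩ := exists_rat_btwn hlt
    have hgen (n : ℕ) (hn : 1 ≤ n) : r ≤ z n + (n : ℚ)⁻¹ := by
      have hr' : (r : ℝ) ≤ ((z n + (n : ℚ)⁻¹ : ℚ) : ℝ) := by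
        push_cast
        linarith [(hz n hn).2, two_zpow_neg_le_inv_natCast hn]
      exact_mod_cast hr'
    have hle := (coordForm 1 (-r) 1).nonneg_of_mem_sInter_closedCones
      ⟨by simp, fun n hn => by
        simp only [coordForm_apply, one_mul, neg_mul, one_div, Set.mem_ofPred_eq, mul_one]
        linarith [hgen n hn]⟩ hx
    simp only [coordForm_apply] at hle
    linarith [(Rat.cast_lt (K := ℝ)).mp hxr]
  · obtain ⟨r, hr, hrx⟩ := exists_rat_btwn hgt
    have hgen (n : ℕ) (hn : 1 ≤ n) : z n ≤ r := by
      exact_mod_cast (show (z n : ℝ) ≤ r by linarith [(hz n hn).1])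
    have hle := (coordForm 0 r (-1)).nonneg_of_mem_sInter_closedCones
      ⟨by simp, fun n hn => by simpa using hgen n hn⟩ hx
    simp only [coordForm_apply] at hle
    linarith [(Rat.cast_lt (K := ℝ)).mp hrx]
end
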